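/- arXiv:0806.2599 — 2 statements merged into one kernel-verified Lean document; each statement's English description precedes it below -/
import Mathlib

section
/- Let (γ,δ) be a pair of partitions. For every index 1 ≤ j ≤ l(δ), the number of parts of γ other than γ_1 that are strictly greater than δ_j is at least the number of unbalanced parts δ_l with l < j; that is, #{i ≥ 2 : γ_i > δ_j} ≥ #{l < j : δ_l is unbalanced}. -/
/-- A partition: a nonincreasing list of positive integers. -/
def Ptn : Type := {l : List ℕ // l.Pairwise (· ≥ ·) ∧ ∀ x ∈ l, 0 < x}

namespace Ptn
/-- the list of parts -/
def parts (p : Ptn) : List ℕ := p.1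
/-- the weight `|λ|`: the sum of the parts -/
def wt (p : Ptn) : ℕ := p.parts.sum
/-- the length `l(λ)`: the number of parts -/
def len (p : Ptn) : ℕ := p.parts.length
/-- the largest part (`0` for the empty partition) -/
def maxPart (p : Ptn) : ℕ := p.parts.headI
/-- the Dyson rank: largest part minus number of parts -/
def rank (p : Ptn) : ℤ := (p.maxPart : ℤ) - (p.len : ℤ)
end Ptn

/-- `N(m;n)`: the number of partitions of `n` with rank `m`. -/
noncomputable def rankCount (m : ℤ) (n : ℕ) : ℕ :=
  {p : Ptn | p.wt = n ∧ p.rank = m}.ncard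

/-- A Durfee symbol `(α,β)_D`. -/
structure DurfeeSymbol where
  α : Ptn
  β : Ptn
  D : ℕ
  hD : 0 < D
  hα : ∀ x ∈ α.parts, x ≤ D
  hβ : ∀ x ∈ β.parts, x ≤ D

namespace DurfeeSymbol
/-- the number being represented -/
def wt (s : DurfeeSymbol) : ℕ := s.α.wt + s.β.wt + s.D ^ 2
/-- the rank of a Durfee symbol -/
def rank (s : DurfeeSymbol) : ℤ := (s.α.len : ℤ) - (s.β.len : ℤ)
end DurfeeSymbol

/-- `D_1(m;n)`: the number of Durfee symbols of `n` with rank `m`. -/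
noncomputable def durfeeCount (m : ℤ) (n : ℕ) : ℕ :=
  {s : DurfeeSymbol | s.wt = n ∧ s.rank = m}.ncard

/-- A `k`-marked Durfee symbol; the `0`-based index `i : Fin k` corresponds to the
`1`-based vector `(α^{i+1}, β^{i+1})` of the paper. -/
structure KMDS (k : ℕ) where
  α : Fin k → Ptn
  β : Fin k → Ptn
  D : ℕ
  hD : 0 < D
  /-- `α^i` is nonempty for `1 ≤ i < k` -/
  hne : ∀ i : Fin k, (i : ℕ) + 1 < k → (α i).parts ≠ []
  /-- for `1 ≤ i ≤ k-1`: largest part of `β^i` is at most largest part of `α^i`, and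
  every part of `β^{i+1}` is at least the largest part of `α^i` -/
  hord : ∀ i : Fin k, ∀ h : (i : ℕ) + 1 < k,
    (β i).maxPart ≤ (α i).maxPart ∧
    ∀ x ∈ (β ⟨(i : ℕ) + 1, h⟩).parts, (α i).maxPart ≤ x
  /-- all parts of `α^k` and `β^k` are at most `D` -/
  htop : ∀ i : Fin k, (i : ℕ) + 1 = k →
    (∀ x ∈ (α i).parts, x ≤ D) ∧ (∀ x ∈ (β i).parts, x ≤ D)

namespace KMDS
variable {k : ℕ}
/-- the number being represented -/
def wt (η : KMDS k) : ℕ := (∑ i, ((η.α i).wt + (η.β i).wt)) + η.D ^ 2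
/-- the `i`-th rank `ρ_i(η)` (with `i` zero-based) -/
def rank (η : KMDS k) (i : Fin k) : ℤ :=
  if (i : ℕ) + 1 = k then ((η.α i).len : ℤ) - ((η.β i).len : ℤ)
  else ((η.α i).len : ℤ) - ((η.β i).len : ℤ) - 1
end KMDS

/-- `D_k(m_1,…,m_k;n)`: the number of `k`-marked Durfee symbols of `n` with `i`-th rank `m_i`. -/
noncomputable def kmdsCount {k : ℕ} (m : Fin k → ℤ) (n : ℕ) : ℕ :=
  {η : KMDS k | η.wt = n ∧ ∀ i, η.rank i = m i}.ncard

/-- `D_k(n)`: the total number of `k`-marked Durfee symbols of `n`. -/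
noncomputable def kmdsTotal (k : ℕ) (n : ℕ) : ℕ := {η : KMDS k | η.wt = n}.ncard

/-- `(a,b)` is a two-line strict shifted partition: `l(a) > l(b)` and
`a_{i+1} > b_i` for `1 ≤ i ≤ l(b)` (stated with zero-based indices). -/
def StrictShifted (a b : Ptn) : Prop :=
  b.len < a.len ∧ ∀ i < b.len, b.parts.getD i 0 < a.parts.getD (i + 1) 0

/-- a `k`-marked Durfee symbol is strict shifted if every vector except the `k`-th one is a
two-line strict shifted partition -/
def KMDS.IsStrictShifted {k : ℕ} (η : KMDS k) : Prop :=
  ∀ i : Fin k, (i : ℕ) + 1 < k → StrictShifted (η.α i) (η.β i)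

/-- `D^{ss}_k(m_1,…,m_k;n)`: the number of `k`-marked strict shifted Durfee symbols of `n`
with `i`-th rank `m_i`. -/
noncomputable def kmssCount {k : ℕ} (m : Fin k → ℤ) (n : ℕ) : ℕ :=
  {η : KMDS k | η.IsStrictShifted ∧ η.wt = n ∧ ∀ i, η.rank i = m i}.ncard

/-- `balFlags γ δ i` is the list of the balanced/unbalanced flags (recursively defined)
of the parts `δ_1, …, δ_i` (zero-based: entry `j` is the flag of the part of `δ` with
zero-based index `j`): `δ_j` is balanced iff `γ_{j+1} ≤ δ_j` (one-based) and the number of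
one-based indices `i ≥ 2` with `γ_i > δ_j` equals the number of unbalanced parts before
`δ_j` in `δ`. -/
def balFlags (γ δ : List ℕ) : ℕ → List Bool
  | 0 => []
  | i + 1 =>
    let prev := balFlags γ δ i
    prev ++ [decide (γ.getD (i + 1) 0 ≤ δ.getD i 0) &&
      (((List.range γ.length).filter fun j =>
          decide (1 ≤ j) && decide (δ.getD i 0 < γ.getD j 0)).length
        == (prev.filter fun b => !b).length)]

/-- the part of `δ` with zero-based index `i` is balanced with respect to `(γ, δ)` -/
def IsBalancedIdx (γ δ : List ℕ) (i : ℕ) : Prop :=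
  (balFlags γ δ (i + 1)).getD i false = true

/-- `b(γ,δ)`: the number of balanced parts of `δ` -/
def numBalanced (γ δ : Ptn) : ℕ :=
  ((balFlags γ.parts δ.parts δ.len).filter fun b => b).length

/-- the `i`-th balanced number `nb_i(η)` (with `i` zero-based) -/
def KMDS.nb {k : ℕ} (η : KMDS k) (i : Fin k) : ℕ :=
  if (i : ℕ) + 1 = k then 0 else numBalanced (η.α i) (η.β i)

/-- An odd Durfee symbol `(α,β)_D`. -/
structure OddDurfee where
  α : Ptn
  β : Ptn
  D : ℕ
  hα : ∀ x ∈ α.parts, Odd x ∧ x ≤ 2 * D + 1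
  hβ : ∀ x ∈ β.parts, Odd x ∧ x ≤ 2 * D + 1

namespace OddDurfee
/-- the number being represented -/
def wt (s : OddDurfee) : ℕ := s.α.wt + s.β.wt + 2 * s.D ^ 2 + 2 * s.D + 1
/-- the odd rank -/
def rank (s : OddDurfee) : ℤ := (s.α.len : ℤ) - (s.β.len : ℤ)
end OddDurfee

/-- `D^0_1(m;n)`: the number of odd Durfee symbols of `n` with odd rank `m`. -/
noncomputable def oddDurfeeCount (m : ℤ) (n : ℕ) : ℕ :=
  {s : OddDurfee | s.wt = n ∧ s.rank = m}.ncard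

/-- A `k`-marked odd Durfee symbol; index conventions as in `KMDS`. -/
structure KMODS (k : ℕ) where
  α : Fin k → Ptn
  β : Fin k → Ptn
  D : ℕ
  hodd : ∀ i : Fin k, (∀ x ∈ (α i).parts, Odd x) ∧ ∀ x ∈ (β i).parts, Odd x
  hne : ∀ i : Fin k, (i : ℕ) + 1 < k → (α i).parts ≠ []
  hord : ∀ i : Fin k, ∀ h : (i : ℕ) + 1 < k,
    (β i).maxPart ≤ (α i).maxPart ∧
    ∀ x ∈ (β ⟨(i : ℕ) + 1, h⟩).parts, (α i).maxPart ≤ x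
  htop : ∀ i : Fin k, (i : ℕ) + 1 = k →
    (∀ x ∈ (α i).parts, x ≤ 2 * D + 1) ∧ (∀ x ∈ (β i).parts, x ≤ 2 * D + 1)

namespace KMODS
variable {k : ℕ}
/-- the number being represented -/
def wt (η : KMODS k) : ℕ := (∑ i, ((η.α i).wt + (η.β i).wt)) + 2 * η.D ^ 2 + 2 * η.D + 1
/-- the `i`-th odd rank (with `i` zero-based) -/
def rank (η : KMODS k) (i : Fin k) : ℤ :=
  if (i : ℕ) + 1 = k then ((η.α i).len : ℤ) - ((η.β i).len : ℤ)
  else ((η.α i).len : ℤ) - ((η.β i).len : ℤ) - 1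
end KMODS

/-- `D^0_k(m_1,…,m_k;n)` -/
noncomputable def kmodsCount {k : ℕ} (m : Fin k → ℤ) (n : ℕ) : ℕ :=
  {η : KMODS k | η.wt = n ∧ ∀ i, η.rank i = m i}.ncard

/-- `D^0_k(n)`: the total number of `k`-marked odd Durfee symbols of `n`. -/
noncomputable def kmodsTotal (k : ℕ) (n : ℕ) : ℕ := {η : KMODS k | η.wt = n}.ncard
instance (γ δ : List ℕ) (i : ℕ) : Decidable (IsBalancedIdx γ δ i) := by
  unfold IsBalancedIdx; infer_instance

/-!
Induction on `n`, comparing the number `U(n)` of unbalanced parts among `δ_1, …, δ_n` with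
`C(x) = #{i ≥ 2 : γ_i > x}` at `x = δ_{n+1}`. Since `δ` is nonincreasing, `C(δ_{n+1})` can only
grow with `n`, so it suffices that an unbalanced part `δ_{n+1}` forces `U(n) < C(δ_{n+1})`.
If instead `U(n) = C(δ_{n+1})`, unbalancedness means `γ_{n+2} > δ_{n+1}`; as `γ` is
nonincreasing, `γ_2, …, γ_{n+2}` all exceed `δ_{n+1}`, so `C(δ_{n+1}) ≥ n + 1 > U(n)`.
-/

/-- `#{i ≥ 2 : γ_i > x}` in the one-based numbering of the paper. -/
def countAbove (γ : List ℕ) (x : ℕ) : ℕ :=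
  ((Finset.range γ.length).filter fun i => 1 ≤ i ∧ x < γ.getD i 0).card

def countUnbalanced (γ δ : List ℕ) (n : ℕ) : ℕ :=
  ((Finset.range n).filter fun l => ¬ IsBalancedIdx γ δ l).card

theorem length_filter_range_eq_countAbove (γ : List ℕ) (x : ℕ) :
    ((List.range γ.length).filter fun j => decide (1 ≤ j) && decide (x < γ.getD j 0)).length =
      countAbove γ x := by
  change _ = ((List.range γ.length).filter fun j => decide (1 ≤ j ∧ x < γ.getD j 0)).length
  simp only [Bool.decide_and]

section Balanced

variable (γ δ : List ℕ)

theorem length_balFlags : ∀ n, (balFlags γ δ n).length = n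
  | 0 => rfl
  | n + 1 => by simp [balFlags, length_balFlags n]

theorem balFlags_succ (n : ℕ) :
    balFlags γ δ (n + 1) = balFlags γ δ n ++ [decide (IsBalancedIdx γ δ n)] := by
  simp [IsBalancedIdx, balFlags, length_balFlags, Bool.beq_eq_decide_eq]

theorem countUnbalanced_succ (n : ℕ) :
    countUnbalanced γ δ (n + 1) =
      countUnbalanced γ δ n + if IsBalancedIdx γ δ n then 0 else 1 := by
  unfold countUnbalanced
  rw [Finset.range_add_one, Finset.filter_insert]
  split_ifs with h
  · rfl
  · exact Finset.card_insert_of_notMem (by simp)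

theorem countUnbalanced_le (n : ℕ) : countUnbalanced γ δ n ≤ n :=
  (Finset.card_filter_le _ _).trans (Finset.card_range n).le

theorem length_filter_not_balFlags (n : ℕ) :
    ((balFlags γ δ n).filter fun b => !b).length = countUnbalanced γ δ n := by
  induction n with
  | zero => rfl
  | succ n ih =>
    by_cases h : IsBalancedIdx γ δ n <;> simp [balFlags_succ, countUnbalanced_succ, h, ih]

theorem isBalancedIdx_iff (n : ℕ) :
    IsBalancedIdx γ δ n ↔
      γ.getD (n + 1) 0 ≤ δ.getD n 0 ∧
        countAbove γ (δ.getD n 0) = countUnbalanced γ δ n := by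
  rw [IsBalancedIdx, balFlags, List.getD_append_right _ _ _ _ (length_balFlags γ δ n).le,
    length_balFlags, Nat.sub_self, ← length_filter_not_balFlags,
    ← length_filter_range_eq_countAbove]
  simp

end Balanced

theorem antitone_getD_of_pairwise_ge {d : List ℕ} (hd : d.Pairwise (· ≥ ·)) :
    Antitone fun n => d.getD n 0 := by
  intro m n hmn
  show d.getD n 0 ≤ d.getD m 0
  rcases lt_or_ge n d.length with hn | hn
  · rcases hmn.lt_or_eq with h | rfl
    · rw [List.getD_eq_getElem _ _ hn, List.getD_eq_getElem _ _ (h.trans hn)]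
      exact List.pairwise_iff_getElem.mp hd m n _ hn h
    · rfl
  · rw [List.getD_eq_default _ _ hn]
    exact Nat.zero_le _

theorem countAbove_antitone (γ : List ℕ) : Antitone (countAbove γ) := by
  intro x y hxy
  refine Finset.card_le_card (Finset.monotone_filter_right _ ?_)
  intro i _ hi
  exact ⟨hi.1, hxy.trans_lt hi.2⟩

theorem le_countAbove_of_lt_getD {γ : List ℕ} (hγ : γ.Pairwise (· ≥ ·)) {x m : ℕ}
    (hm : x < γ.getD m 0) : m ≤ countAbove γ x := by
  have hsub : Finset.Icc 1 m ⊆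
      (Finset.range γ.length).filter fun i => 1 ≤ i ∧ x < γ.getD i 0 := by
    intro i hi
    obtain ⟨hi1, him⟩ := Finset.mem_Icc.mp hi
    have hxi : x < γ.getD i 0 := hm.trans_le (antitone_getD_of_pairwise_ge hγ him)
    have hilen : i < γ.length := by
      by_contra! h
      rw [List.getD_eq_default _ _ h] at hxi
      exact Nat.not_lt_zero _ hxi
    simpa [hilen, hi1] using hxi
  calc m = (Finset.Icc 1 m).card := by simp
    _ ≤ countAbove γ x := Finset.card_le_card hsub

theorem countUnbalanced_lt_countAbove_of_not_isBalancedIdx {γ δ : List ℕ}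
    (hγ : γ.Pairwise (· ≥ ·)) {n : ℕ}
    (hn : ¬ IsBalancedIdx γ δ n)
    (hle : countUnbalanced γ δ n ≤ countAbove γ (δ.getD n 0)) :
    countUnbalanced γ δ n < countAbove γ (δ.getD n 0) := by
  refine hle.lt_of_ne fun heq => ?_
  have hlt : δ.getD n 0 < γ.getD (n + 1) 0 := by
    by_contra! h
    exact hn ((isBalancedIdx_iff γ δ n).mpr ⟨h, heq.symm⟩)
  have := le_countAbove_of_lt_getD hγ hlt
  have := countUnbalanced_le γ δ n
  omega

theorem countUnbalanced_le_countAbove {γ δ : List ℕ} (hγ : γ.Pairwise (· ≥ ·))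
    (hδ : δ.Pairwise (· ≥ ·)) (n : ℕ) :
    countUnbalanced γ δ n ≤ countAbove γ (δ.getD n 0) := by
  induction n with
  | zero => exact Nat.zero_le _
  | succ n ih =>
    have hmono := countAbove_antitone γ (antitone_getD_of_pairwise_ge hδ n.le_succ)
    rw [countUnbalanced_succ]
    split_ifs with h
    · exact ih.trans hmono
    · exact (countUnbalanced_lt_countAbove_of_not_isBalancedIdx hγ h ih).trans_le hmono

theorem count_unbalanced_le_general (γ δ : Ptn) (j : ℕ) :
    ((Finset.range (j - 1)).filter fun l => ¬ IsBalancedIdx γ.parts δ.parts l).card ≤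
      ((Finset.range γ.len).filter fun i =>
        1 ≤ i ∧ δ.parts.getD (j - 1) 0 < γ.parts.getD i 0).card :=
  countUnbalanced_le_countAbove γ.2.1 δ.2.1 (j - 1)

/-- Proposition 2.3: for a pair of partitions `(γ,δ)` and any one-based
index `1 ≤ j ≤ l(δ)`, the number of parts of `γ` other than `γ_1` strictly greater than
`δ_j` is at least the number of unbalanced parts `δ_l` with `l < j`.  (Zero-based: part
`δ_j` is `δ.parts.getD (j-1) 0`, and parts of `γ` other than the first are those with
zero-based index `i ≥ 1`.) -/
theorem count_unbalanced_le (γ δ : Ptn) (j : ℕ) (hj1 : 1 ≤ j) (hj2 : j ≤ δ.len) :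
    ((Finset.range (j - 1)).filter fun l => ¬ IsBalancedIdx γ.parts δ.parts l).card ≤
      ((Finset.range γ.len).filter fun i =>
        1 ≤ i ∧ δ.parts.getD (j - 1) 0 < γ.parts.getD i 0).card :=
  count_unbalanced_le_general γ δ j
end

section
/- Let (ᾱ,β̄) be a two-line strict shifted partition with l(ᾱ) − l(β̄) = M where M ≥ 2. Assign to each part ᾱ_i the subscript g_i defined by g_1 = 0 and, for i ≥ 2, g_i = (i − 2) − #{j : β̄_j ≥ ᾱ_i}. Then for every integer c with 0 ≤ c ≤ M − 2 there exists an index i with g_i = c; moreover, if ᾱ_{t_c} denotes the smallest part of ᾱ among indices whose subscript equals c, then ᾱ_{t_0} ≥ ᾱ_{t_1} ≥ ... ≥ ᾱ_{t_{M−2}}. -/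
/-! The subscript `g` rises by at most one from each index to the next, because the count
`#{j : β̄_j ≥ ᾱ_i}` is monotone in `i` as `ᾱ` is nonincreasing; it starts at `g 1 = 0` and
ends at `g (l(ᾱ)) ≥ l(ᾱ) - 2 - l(β̄) = M - 2`.  A discrete intermediate value argument then
shows that every value between `g t` and `M - 2` is taken at some index `≥ t`.  Applied from
`t = 1` this gives surjectivity; applied from any index `t` with subscript `c' ≤ c`, it gives
an index `i ≥ t` with subscript `c`, and `ᾱ_i ≤ ᾱ_t`. -/

theorem Int.exists_eq_of_le_succ_of_le {f : ℕ → ℤ} {t n : ℕ}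
    (hf : ∀ i, t ≤ i → i < n → f (i + 1) ≤ f i + 1) (htn : t ≤ n) {x : ℤ}
    (hxt : f t ≤ x) (hxn : x ≤ f n) : ∃ i, t ≤ i ∧ i ≤ n ∧ f i = x := by
  induction n, htn using Nat.le_induction with
  | base => exact ⟨t, le_rfl, le_rfl, le_antisymm hxt hxn⟩
  | succ n htn ih =>
    by_cases hx : x ≤ f n
    · obtain ⟨i, hti, hin, hi⟩ := ih (fun i hti hin => hf i hti (by omega)) hx
      exact ⟨i, hti, by omega, hi⟩
    · have := hf n htn (by omega)
      exact ⟨n + 1, by omega, le_rfl, by omega⟩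

theorem Ptn.antitone_getD (a : Ptn) : Antitone fun i => a.parts.getD i 0 := by
  intro i j hij
  dsimp only
  by_cases hj : j < a.parts.length
  · rw [List.getD_eq_getElem _ _ hj, List.getD_eq_getElem _ _ (by omega)]
    rcases hij.eq_or_lt with rfl | hij
    · exact le_rfl
    · exact List.pairwise_iff_getElem.mp a.2.1 i j _ hj hij
  · rw [List.getD_eq_default _ _ (not_lt.mp hj)]
    exact Nat.zero_le _

/-- `#{j : β̄_j ≥ ᾱ_i}`, with `i` one-based. -/
def largerPartCount (a b : Ptn) (i : ℕ) : ℕ :=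
  ((Finset.range b.len).filter fun j => a.parts.getD (i - 1) 0 ≤ b.parts.getD j 0).card

theorem largerPartCount_mono (a b : Ptn) : Monotone (largerPartCount a b) := fun _ _ hij =>
  Finset.card_le_card <| Finset.monotone_filter_right _ fun _ _ hle =>
    (a.antitone_getD (Nat.sub_le_sub_right hij 1)).trans hle

theorem largerPartCount_le_len (a b : Ptn) (i : ℕ) : largerPartCount a b i ≤ b.len :=
  (Finset.card_filter_le _ _).trans (Finset.card_range _).le

section Subscript

variable {a b : Ptn} {g : ℕ → ℤ}

theorem subscript_succ_le (hg1 : g 1 = 0)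
    (hg : ∀ i, 2 ≤ i → i ≤ a.len → g i = (i : ℤ) - 2 - largerPartCount a b i)
    {i : ℕ} (hi : 1 ≤ i) (hia : i + 1 ≤ a.len) : g (i + 1) ≤ g i + 1 := by
  rw [hg (i + 1) (by omega) hia]
  rcases hi.eq_or_lt with rfl | hi
  · rw [hg1]
    omega
  · have := largerPartCount_mono a b (Nat.le_add_right i 1)
    rw [hg i hi (by omega)]
    omega

theorem le_subscript_len {M : ℕ} (hM : 2 ≤ M) (hlen : a.len = b.len + M)
    (hg : ∀ i, 2 ≤ i → i ≤ a.len → g i = (i : ℤ) - 2 - largerPartCount a b i) :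
    (M : ℤ) - 2 ≤ g a.len := by
  have := largerPartCount_le_len a b a.len
  rw [hg a.len (by omega) le_rfl]
  omega

theorem exists_subscript_eq {M : ℕ} (hM : 2 ≤ M) (hlen : a.len = b.len + M) (hg1 : g 1 = 0)
    (hg : ∀ i, 2 ≤ i → i ≤ a.len → g i = (i : ℤ) - 2 - largerPartCount a b i)
    {t : ℕ} (ht : 1 ≤ t) (hta : t ≤ a.len) {x : ℤ} (hxt : g t ≤ x) (hxM : x ≤ M - 2) :
    ∃ i, t ≤ i ∧ i ≤ a.len ∧ g i = x :=
  Int.exists_eq_of_le_succ_of_le (fun _ hti hia => subscript_succ_le hg1 hg (ht.trans hti) hia)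
    hta hxt (hxM.trans (le_subscript_len hM hlen hg))

end Subscript

/-- Indices are one-based: `g i` is the subscript of `ᾱ_i = a.parts.getD (i - 1) 0`. -/
theorem subscript_surjective_and_antitone_general (a b : Ptn)
    (M : ℕ) (hM : 2 ≤ M) (hlen : a.len = b.len + M) (g : ℕ → ℤ) (hg1 : g 1 = 0)
    (hg : ∀ i, 2 ≤ i → i ≤ a.len →
      g i = (i : ℤ) - 2 -
        (((Finset.range b.len).filter fun j =>
            a.parts.getD (i - 1) 0 ≤ b.parts.getD j 0).card : ℤ)) :
    ∀ c : ℕ, c ≤ M - 2 →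
      (∃ i, 1 ≤ i ∧ i ≤ a.len ∧ g i = (c : ℤ)) ∧
      ∀ c' : ℕ, c' ≤ c →
        sInf {x | ∃ i, 1 ≤ i ∧ i ≤ a.len ∧ g i = (c : ℤ) ∧ x = a.parts.getD (i - 1) 0} ≤
          sInf {x | ∃ i, 1 ≤ i ∧ i ≤ a.len ∧ g i = (c' : ℤ) ∧ x = a.parts.getD (i - 1) 0} := by
  have hits := @exists_subscript_eq a b g M hM hlen hg1 hg
  have hsurj : ∀ c : ℕ, c ≤ M - 2 → ∃ i, 1 ≤ i ∧ i ≤ a.len ∧ g i = (c : ℤ) := fun c hc =>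
    hits le_rfl (by omega) (by rw [hg1]; positivity) (by omega)
  refine fun c hc => ⟨hsurj c hc, fun c' hc' => ?_⟩
  obtain ⟨i', hi', hi'a, hgi'⟩ := hsurj c' (hc'.trans hc)
  refine le_csInf ⟨_, i', hi', hi'a, hgi', rfl⟩ ?_
  rintro _ ⟨t, ht, hta, hgt, rfl⟩
  obtain ⟨i, hti, hia, hgi⟩ := hits (x := c) ht hta (by rw [hgt]; exact_mod_cast hc') (by omega)
  calc _ ≤ a.parts.getD (i - 1) 0 := Nat.sInf_le (by exact ⟨i, ht.trans hti, hia, hgi, rfl⟩)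
    _ ≤ a.parts.getD (t - 1) 0 := a.antitone_getD (Nat.sub_le_sub_right hti 1)

/-- Lemma 2.5: let `(ᾱ,β̄)` be a two-line strict shifted partition with
`l(ᾱ) - l(β̄) = M ≥ 2` and let `g` be the subscript function: `g 1 = 0` and for one-based
`2 ≤ i ≤ l(ᾱ)`, `g i = (i - 2) - #{j : β̄_j ≥ ᾱ_i}`.  Then every `0 ≤ c ≤ M - 2` is
attained as a subscript, and the minimal part of `ᾱ` with subscript `c` is nonincreasing
in `c`.  (One-based part `ᾱ_i` is `a.parts.getD (i-1) 0`.) -/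
theorem subscript_surjective_and_antitone (a b : Ptn) (hss : StrictShifted a b)
    (M : ℕ) (hM : 2 ≤ M) (hlen : a.len = b.len + M) (g : ℕ → ℤ) (hg1 : g 1 = 0)
    (hg : ∀ i, 2 ≤ i → i ≤ a.len →
      g i = (i : ℤ) - 2 -
        (((Finset.range b.len).filter fun j =>
            a.parts.getD (i - 1) 0 ≤ b.parts.getD j 0).card : ℤ)) :
    ∀ c : ℕ, c ≤ M - 2 →
      (∃ i, 1 ≤ i ∧ i ≤ a.len ∧ g i = (c : ℤ)) ∧
      ∀ c' : ℕ, c' ≤ c →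
        sInf {x | ∃ i, 1 ≤ i ∧ i ≤ a.len ∧ g i = (c : ℤ) ∧ x = a.parts.getD (i - 1) 0} ≤
          sInf {x | ∃ i, 1 ≤ i ∧ i ≤ a.len ∧ g i = (c' : ℤ) ∧ x = a.parts.getD (i - 1) 0} :=
  subscript_surjective_and_antitone_general a b M hM hlen g hg1 hg
end
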